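/- arXiv:0704.1034 — 5 statements merged into one kernel-verified Lean document; each statement's English description precedes it below -/
import Mathlib

section
/- Let Δ be a compact convex set in ℝⁿ written as the union of two closed n-dimensional simplices Σ₋ and Σ₊ such that Σ₋ ∩ Σ₊ = F is a common (n-1)-dimensional face of both. Then the vertex set of Δ (its extreme points) is contained in the union of the vertex sets of Σ₋ and Σ₊, and every vertex of Σ₋ or Σ₊ not lying in F is an extreme point of Δ; in particular Δ has at most n+2 extreme points. -/
/-!
Let `P` and `Q` be the two simplices and `λ` the barycentric coordinates of `P`. The vertex `p a`
opposite to the common facet is the unique maximiser of `λ a` on `P ∪ Q`: on `P` one has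
`λ a ≤ 1` with equality only at `p a`, and `λ a ≤ 0` on `Q`, since a point of `Q` with
`λ a > 0`, joined to the centroid of the facet, would yield points of `P ∩ Q` off the facet.
Conversely, an extreme point of `P ∪ Q` lying in `P` is extreme in `P`, hence a vertex of `P`;
otherwise it is a vertex of `Q` outside `P`, and `q b` is the only one. So the extreme points lie
in `insert (q b) (range p)`, a set of at most `n + 2` points.
-/

open Set Filter Topology

section

variable {E : Type*} [AddCommGroup E] [Module ℝ E]

theorem mem_extremePoints_of_forall_ne_lt (f : E →ᵃ[ℝ] ℝ) {S : Set E} {x : E} (hx : x ∈ S)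
    (hlt : ∀ y ∈ S, y ≠ x → f y < f x) : x ∈ S.extremePoints ℝ := by
  refine mem_extremePoints_iff_forall_segment.2 ⟨hx, fun x₁ h₁ x₂ h₂ hseg => ?_⟩
  by_contra! hne
  have hfx : f x ∈ uIcc (f x₁) (f x₂) := by
    rw [← segment_eq_uIcc, ← image_segment]
    exact mem_image_of_mem f hseg
  exact (hfx.2.trans_lt (max_lt (hlt x₁ h₁ hne.1) (hlt x₂ h₂ hne.2))).false

theorem Finset.centroid_mem_convexHull_image {ι : Type*} (s : Finset ι) (hs : s.Nonempty)
    (p : ι → E) : s.centroid ℝ p ∈ convexHull ℝ (p '' s) := by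
  rw [s.centroid_eq_centerMass hs]
  refine s.centerMass_mem_convexHull (fun i _ => ?_) ?_
    fun i hi => Set.mem_image_of_mem p (mem_coe.2 hi)
  · rw [Finset.centroidWeights_apply]; positivity
  · rw [s.sum_centroidWeights_eq_one_of_nonempty ℝ hs]; exact one_pos

namespace AffineBasis

variable {ι : Type*} (B : AffineBasis ι ℝ E)

theorem coord_eq_zero_of_mem_convexHull_image_ne {a : ι} {x : E}
    (hx : x ∈ convexHull ℝ (B '' {i | i ≠ a})) : B.coord a x = 0 := by
  classical
  refine convexHull_min ?_ ((convex_singleton 0).affine_preimage (B.coord a)) hx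
  rintro _ ⟨i, hi, rfl⟩
  simp [B.coord_apply, Ne.symm hi]

variable [Fintype ι]

theorem coord_lt_one_of_mem_convexHull {a : ι} {y : E} (hy : y ∈ convexHull ℝ (range B))
    (hne : y ≠ B a) : B.coord a y < 1 := by
  classical
  rw [B.convexHull_eq_nonneg_coord] at hy
  by_contra! hle
  have hsum := B.sum_coord_apply_eq_one y
  rw [← Finset.add_sum_erase _ _ (Finset.mem_univ a)] at hsum
  have hrest : ∀ i ∈ Finset.univ.erase a, B.coord i y = 0 :=
    (Finset.sum_eq_zero_iff_of_nonneg fun i _ => hy i).1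
      (le_antisymm (by linarith) (Finset.sum_nonneg fun i _ => hy i))
  refine hne (B.ext_elem fun i => ?_)
  rw [B.coord_apply]
  split_ifs with hia
  · subst hia
    linarith [Finset.sum_eq_zero hrest]
  · exact hrest i (Finset.mem_erase.2 ⟨hia, Finset.mem_univ i⟩)

theorem coord_nonpos_of_convex [Nontrivial ι] {a : ι} {Q : Set E} (hQ : Convex ℝ Q)
    (hfacet : convexHull ℝ (B '' {i | i ≠ a}) ⊆ Q)
    (hPQ : ∀ x ∈ convexHull ℝ (range B) ∩ Q, B.coord a x ≤ 0) {x : E} (hx : x ∈ Q) :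
    B.coord a x ≤ 0 := by
  classical
  -- Moving from the centroid of the facet towards `x`, all coordinates are positive for a while,
  -- so `P ∩ Q` would contain a point with positive `a`-coordinate.
  by_contra! hxa
  set s : Finset ι := {a}ᶜ
  have hs : s.Nonempty := (exists_ne a).imp fun i hi => by simpa [s] using hi
  set c := s.centroid ℝ B
  have hcF : c ∈ convexHull ℝ (B '' {i | i ≠ a}) := by
    simpa [s, Set.compl_singleton_eq] using s.centroid_mem_convexHull_image hs B
  have hc : ∀ i ≠ a, 0 < B.coord i c := fun i hi => by
    rw [B.coord_apply_centroid (by simpa [s] using hi)]; positivity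
  have hca : B.coord a c = 0 := B.coord_eq_zero_of_mem_convexHull_image_ne hcF
  have hnear : ∀ᶠ t in 𝓝[>] (0 : ℝ),
      t ∈ Icc (0 : ℝ) 1 ∧ ∀ i, 0 < B.coord i (AffineMap.lineMap c x t) := by
    have h01 : ∀ᶠ t in 𝓝[>] (0 : ℝ), t ∈ Icc (0 : ℝ) 1 :=
      mem_of_superset (Ioo_mem_nhdsGT one_pos) Ioo_subset_Icc_self
    refine h01.and (eventually_all.2 fun i => ?_)
    simp only [AffineMap.apply_lineMap]
    by_cases hia : i = a
    · subst hia
      filter_upwards [self_mem_nhdsWithin] with t (ht : 0 < t)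
      rw [hca, AffineMap.lineMap_apply_ring]
      nlinarith
    · have hcont : Tendsto (fun t : ℝ => AffineMap.lineMap (B.coord i c) (B.coord i x) t) (𝓝 0)
          (𝓝 (B.coord i c)) := by
        simpa using
          (AffineMap.lineMap_continuous (p := B.coord i c) (q := B.coord i x)).tendsto (0 : ℝ)
      exact nhdsWithin_le_nhds (hcont.eventually (lt_mem_nhds (hc i hia)))
  obtain ⟨t, ht01, hpos⟩ := hnear.exists
  refine (hPQ _ ⟨?_, hQ.lineMap_mem (hfacet hcF) hx ht01⟩).not_gt (hpos a)
  rw [B.convexHull_eq_nonneg_coord]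
  exact fun i => (hpos i).le

theorem mem_extremePoints_convexHull_union (a : ι) {Q : Set E} (hQ : Convex ℝ Q)
    (hPQ : convexHull ℝ (range B) ∩ Q = convexHull ℝ (B '' {i | i ≠ a})) :
    B a ∈ (convexHull ℝ (range B) ∪ Q).extremePoints ℝ := by
  have haP : B a ∈ convexHull ℝ (range B) := subset_convexHull ℝ _ (mem_range_self a)
  cases subsingleton_or_nontrivial ι
  · have : Subsingleton E := ⟨fun x y => B.ext_elem fun i => by simp⟩
    exact ⟨Or.inl haP, fun _ _ _ _ _ => Subsingleton.elim _ _⟩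
  have hQa : ∀ x ∈ Q, B.coord a x ≤ 0 := fun x hx =>
    B.coord_nonpos_of_convex hQ (hPQ ▸ inter_subset_right)
      (fun y hy => (B.coord_eq_zero_of_mem_convexHull_image_ne (hPQ ▸ hy)).le) hx
  refine mem_extremePoints_of_forall_ne_lt (B.coord a) (Or.inl haP) ?_
  rintro y (hy | hy) hne <;> rw [B.coord_apply_eq]
  · exact B.coord_lt_one_of_mem_convexHull hy hne
  · linarith [hQa y hy]

end AffineBasis

theorem extremePoints_convexHull_union_subset {ι κ : Type*} {p : ι → E} {q : κ → E} (b : κ)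
    (hq : ∀ j ≠ b, q j ∈ convexHull ℝ (range p)) :
    (convexHull ℝ (range p) ∪ convexHull ℝ (range q)).extremePoints ℝ ⊆
      insert (q b) (range p) := by
  intro x hx
  by_cases hxP : x ∈ convexHull ℝ (range p)
  · exact Or.inr (extremePoints_convexHull_subset
      (inter_extremePoints_subset_extremePoints_of_subset subset_union_left ⟨hxP, hx⟩))
  · obtain ⟨j, rfl⟩ := extremePoints_convexHull_subset
      (inter_extremePoints_subset_extremePoints_of_subset subset_union_right
        ⟨hx.1.resolve_left hxP, hx⟩)
    by_cases hj : j = b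
    · exact hj ▸ mem_insert _ _
    · exact absurd (hq j hj) hxP

end

noncomputable def AffineIndependent.toAffineBasis {ι V : Type*} [Fintype ι] [AddCommGroup V]
    [Module ℝ V] [FiniteDimensional ℝ V] {p : ι → V} (hp : AffineIndependent ℝ p)
    (hcard : Fintype.card ι = Module.finrank ℝ V + 1) : AffineBasis ι ℝ V :=
  ⟨p, hp, hp.affineSpan_eq_top_iff_card_eq_finrank_add_one.2 hcard⟩

/-- if Δ is the union of two closed n-simplices meeting exactly in a
common (n-1)-dimensional face F, then the extreme points of Δ lie among the vertices of
the two simplices, every vertex not in F is an extreme point of Δ, and Δ has at most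
n + 2 extreme points. -/
theorem stmt_11 {n : ℕ} (p q : Fin (n + 1) → (Fin n → ℝ))
    (hp : AffineIndependent ℝ p) (hq : AffineIndependent ℝ q)
    (a b : Fin (n + 1)) (F Δ : Set (Fin n → ℝ))
    (hΔ : Δ = convexHull ℝ (Set.range p) ∪ convexHull ℝ (Set.range q))
    (hF : convexHull ℝ (Set.range p) ∩ convexHull ℝ (Set.range q) = F)
    (hFp : F = convexHull ℝ (p '' {i | i ≠ a}))
    (hFq : F = convexHull ℝ (q '' {j | j ≠ b})) :
    Set.extremePoints ℝ Δ ⊆ Set.range p ∪ Set.range q ∧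
    (∀ y ∈ Set.range p ∪ Set.range q, y ∉ F → y ∈ Set.extremePoints ℝ Δ) ∧
    (Set.extremePoints ℝ Δ).ncard ≤ n + 2 := by
  subst hΔ
  have hqF : ∀ j ≠ b, q j ∈ F := fun j hj => hFq ▸ subset_convexHull ℝ _ ⟨j, hj, rfl⟩
  have hext := extremePoints_convexHull_union_subset b fun j hj =>
    (hF ▸ inter_subset_left : F ⊆ _) (hqF j hj)
  refine ⟨hext.trans (insert_subset (Or.inr (mem_range_self b)) subset_union_left), ?_, ?_⟩
  · rintro y (⟨i, rfl⟩ | ⟨j, rfl⟩) hy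
    · obtain rfl : i = a := by_contra fun hi => hy (hFp ▸ subset_convexHull ℝ _ ⟨i, hi, rfl⟩)
      exact (hp.toAffineBasis (by simp)).mem_extremePoints_convexHull_union i
        (convex_convexHull ℝ _) (hF.trans hFp)
    · obtain rfl : j = b := by_contra fun hj => hy (hqF j hj)
      rw [union_comm]
      exact (hq.toAffineBasis (by simp)).mem_extremePoints_convexHull_union j
        (convex_convexHull ℝ _) ((inter_comm _ _).trans (hF.trans hFq))
  · calc ((convexHull ℝ (range p) ∪ convexHull ℝ (range q)).extremePoints ℝ).ncard
        ≤ (insert (q b) (range p)).ncard := ncard_le_ncard hext ((finite_range p).insert _)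
      _ ≤ (range p).ncard + 1 := ncard_insert_le _ _
      _ = n + 2 := by rw [ncard_range_of_injective hp.injective, Nat.card_eq_fintype_card,
          Fintype.card_fin]
end

section
/- Let Σ₀, Σ₁, Σ' be three sets in ℝⁿ that are pairwise-disjoint open n-simplices, whose closures satisfy (Σ₀)_c ∩ (Σ₁)_c = (Σ₀)_c ∩ (Σ')_c = (Σ₁)_c ∩ (Σ')_c = F for a common nonempty (n-1)-dimensional face F, with F ⊆ ∂Σ₀ ∩ ∂Σ₁ ∩ ∂Σ'. Suppose further that int((Σ')_c) ∩ int((Σ₀)_c ∪ (Σ₁)_c) = ∅ and the closure of int((Σ₀)_c ∪ (Σ₁)_c) contains F in its interior. Then (Σ')_c ∩ ((Σ₀)_c ∪ (Σ₁)_c) = ∅, contradicting F ≠ ∅; hence no such Σ' exists. -/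
/-!
Pick `x ∈ F`. Every point of a closed simplex is a limit of interior points, so `x` lies in the
closure of the open set `interior (closure S')`; and `x` lies in the open set
`interior (closure (interior (closure S₀ ∪ closure S₁)))`. An open set meeting the closure of an
open set meets that set itself, which applied twice produces a point of
`interior (closure S') ∩ interior (closure S₀ ∪ closure S₁)`.
-/

/-- An open n-simplex: a closed n-simplex minus the facet opposite a designated vertex. -/
def IsOpenSimplex {n : ℕ} (S : Set (Fin n → ℝ)) : Prop :=
  ∃ P : Fin (n + 1) → (Fin n → ℝ), AffineIndependent ℝ P ∧
    ∃ a : Fin (n + 1),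
      S = convexHull ℝ (Set.range P) \ convexHull ℝ (P '' {i | i ≠ a})

open Set

theorem nonempty_inter_of_mem_closure_of_mem_interior_closure {X : Type*}
    [TopologicalSpace X] {U V : Set X} (hU : IsOpen U) {x : X} (hxU : x ∈ closure U)
    (hxV : x ∈ interior (closure V)) : (U ∩ V).Nonempty := by
  have hU_int : (U ∩ interior (closure V)).Nonempty :=
    (closure_inter_open_nonempty_iff isOpen_interior).1 ⟨x, hxU, hxV⟩
  have hU_cl : (closure V ∩ U).Nonempty := hU_int.mono fun y hy => ⟨interior_subset hy.2, hy.1⟩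
  exact ((closure_inter_open_nonempty_iff hU).1 hU_cl).mono fun y hy => ⟨hy.2, hy.1⟩

namespace AffineBasis

theorem convexHull_image_ne_subset_coord_eq_zero {ι 𝕜 E : Type*} [Field 𝕜] [LinearOrder 𝕜]
    [IsStrictOrderedRing 𝕜] [AddCommGroup E] [Module 𝕜 E] (b : AffineBasis ι 𝕜 E) (a : ι) :
    convexHull 𝕜 (b '' {i | i ≠ a}) ⊆ {x | b.coord a x = 0} :=
  convexHull_min (by rintro _ ⟨j, hj, rfl⟩; exact b.coord_apply_ne (Ne.symm hj))
    ((convex_singleton 0).affine_preimage (b.coord a))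

theorem interior_convexHull_subset_diff {ι E : Type*} [Finite ι] [NormedAddCommGroup E]
    [NormedSpace ℝ E] (b : AffineBasis ι ℝ E) (a : ι) :
    interior (convexHull ℝ (range b)) ⊆ convexHull ℝ (range b) \ convexHull ℝ (b '' {i | i ≠ a}) :=
  fun x hx => ⟨interior_subset hx, fun hxa =>
    ((b.interior_convexHull ▸ hx : x ∈ {x | ∀ i, 0 < b.coord i x}) a).ne'
      (b.convexHull_image_ne_subset_coord_eq_zero a hxa)⟩

end AffineBasis

theorem IsOpenSimplex.closure_subset_closure_interior_closure {n : ℕ} {S : Set (Fin n → ℝ)}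
    (hS : IsOpenSimplex S) : closure S ⊆ closure (interior (closure S)) := by
  obtain ⟨P, hP, a, rfl⟩ := hS
  have hspan : affineSpan ℝ (range P) = ⊤ := by
    rw [hP.affineSpan_eq_top_iff_card_eq_finrank_add_one]
    simp
  let b : AffineBasis (Fin (n + 1)) ℝ (Fin n → ℝ) := ⟨P, hP, hspan⟩
  have hint : (interior (convexHull ℝ (range P))).Nonempty :=
    interior_convexHull_nonempty_iff_affineSpan_eq_top.2 hspan
  calc closure (convexHull ℝ (range P) \ convexHull ℝ (P '' {i | i ≠ a}))
      ⊆ convexHull ℝ (range P) :=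
        closure_minimal sdiff_subset ((finite_range P).isClosed_convexHull (𝕜 := ℝ))
    _ ⊆ closure (interior (convexHull ℝ (range P))) := by
        rw [(convex_convexHull ℝ _).closure_interior_eq_closure_of_nonempty_interior hint]
        exact subset_closure
    _ ⊆ _ := closure_mono (interior_maximal
        ((b.interior_convexHull_subset_diff a).trans subset_closure) isOpen_interior)

theorem stmt_14_general {n : ℕ} (S₀ S₁ S' F : Set (Fin n → ℝ))
    (hS' : IsOpenSimplex S')
    (hF0' : closure S₀ ∩ closure S' = F)
    (hFne : F.Nonempty)
    (hint : interior (closure S') ∩ interior (closure S₀ ∪ closure S₁) = ∅)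
    (hFint : F ⊆ interior (closure (interior (closure S₀ ∪ closure S₁)))) :
    False := by
  obtain ⟨x, hxF⟩ := hFne
  have hxS' : x ∈ closure (interior (closure S')) :=
    hS'.closure_subset_closure_interior_closure (hF0' ▸ hxF).2
  obtain ⟨w, hw⟩ :=
    nonempty_inter_of_mem_closure_of_mem_interior_closure isOpen_interior hxS' (hFint hxF)
  exact (hint ▸ hw : w ∈ (∅ : Set (Fin n → ℝ)))

/-- three pairwise disjoint open n-simplices in ℝⁿ cannot pairwise share
the same nonempty (n-1)-dimensional face F of their closures while the closures of the
first two cover a neighborhood of F: no such Σ' exists. -/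
theorem stmt_14 {n : ℕ} (S₀ S₁ S' F : Set (Fin n → ℝ))
    (hS₀ : IsOpenSimplex S₀) (hS₁ : IsOpenSimplex S₁) (hS' : IsOpenSimplex S')
    (hd01 : S₀ ∩ S₁ = ∅) (hd0' : S₀ ∩ S' = ∅) (hd1' : S₁ ∩ S' = ∅)
    (hF01 : closure S₀ ∩ closure S₁ = F)
    (hF0' : closure S₀ ∩ closure S' = F)
    (hF1' : closure S₁ ∩ closure S' = F)
    (hFne : F.Nonempty)
    (hFbd : F ⊆ frontier S₀ ∩ frontier S₁ ∩ frontier S')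
    (hint : interior (closure S') ∩ interior (closure S₀ ∪ closure S₁) = ∅)
    (hFint : F ⊆ interior (closure (interior (closure S₀ ∪ closure S₁)))) :
    False :=
  stmt_14_general S₀ S₁ S' F hS' hF0' hFne hint hFint
end

section
/- Let Δ ⊂ ℝⁿ be the union of the closures of finitely many pairwise disjoint open n-simplices, each of which has a vertex at a vertex of Δ and has all but at most one of its (n-1)-dimensional facets contained in ∂Δ. If some simplex Σ in the family has all of its facets contained in ∂Δ, then Σ_c = Δ and the family consists of exactly one simplex. -/
/-- An open n-simplex with vertex data P and designated vertex index a. -/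
def IsOpenSimplexWith {n : ℕ} (S : Set (Fin n → ℝ))
    (P : Fin (n + 1) → (Fin n → ℝ)) (a : Fin (n + 1)) : Prop :=
  AffineIndependent ℝ P ∧
    S = convexHull ℝ (Set.range P) \ convexHull ℝ (P '' {i | i ≠ a})

/-!
The frontier of the closed simplex `K = Σ_c` is the union of its facets, so the hypothesis puts
`frontier K` inside `frontier Δ`. Then `interior Δ` is covered by the disjoint open sets
`interior K` and `Kᶜ` (a point of `K ∩ interior Δ` outside `interior K` would lie on
`frontier K ⊆ frontier Δ`), and it is connected since `Δ` is convex, so `interior Δ ⊆ K`;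
taking closures gives `Δ ⊆ K`. Any other simplex of the family has interior points, which lie
in `interior Δ = interior K`, hence in both open simplices, contradicting disjointness.
-/

open Set

theorem Convex.eq_of_subset_of_frontier_subset {E : Type*} [AddCommGroup E] [Module ℝ E]
    [TopologicalSpace E] [IsTopologicalAddGroup E] [ContinuousSMul ℝ E] {K Δ : Set E}
    (hΔ : Convex ℝ Δ) (hK : IsClosed K) (hKΔ : K ⊆ Δ) (hKint : (interior K).Nonempty)
    (hfr : frontier K ⊆ frontier Δ) : K = Δ := by
  have hint : interior Δ ⊆ interior K := by
    refine hΔ.interior.isPreconnected.subset_left_of_subset_union isOpen_interior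
      hK.isOpen_compl (disjoint_compl_right.mono_left interior_subset) (fun x hx => ?_) ?_
    · by_contra hxK
      simp only [mem_union, mem_compl_iff, not_or, not_not] at hxK
      have hxfr : x ∈ frontier K := ⟨subset_closure hxK.2, hxK.1⟩
      exact disjoint_interior_frontier.ne_of_mem hx (hfr hxfr) rfl
    · obtain ⟨y, hy⟩ := hKint
      exact ⟨y, interior_mono hKΔ hy, hy⟩
  have hΔint : (interior Δ).Nonempty := hKint.mono (interior_mono hKΔ)
  refine hKΔ.antisymm fun x hx => ?_
  rw [← hK.closure_eq]
  refine closure_mono (hint.trans interior_subset) ?_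
  rw [hΔ.closure_interior_eq_closure_of_nonempty_interior hΔint]
  exact subset_closure hx

section AffineBasis

variable {E ι : Type*} [NormedAddCommGroup E] [NormedSpace ℝ E] [Fintype ι]
  (b : AffineBasis ι ℝ E)

theorem AffineBasis.mem_convexHull_facet_of_coord_eq_zero {x : E}
    (hx : x ∈ convexHull ℝ (range b)) {j : ι} (hj : b.coord j x = 0) :
    x ∈ convexHull ℝ (b '' {m | m ≠ j}) := by
  classical
  rw [b.convexHull_eq_nonneg_coord] at hx
  have hsum : ∑ m ∈ Finset.univ.erase j, b.coord m x = 1 := by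
    rw [Finset.sum_erase (f := fun m => b.coord m x) _ hj, b.sum_coord_apply_eq_one]
  have hcomb : ∑ m ∈ Finset.univ.erase j, b.coord m x • b m = x := by
    rw [Finset.sum_erase (f := fun m => b.coord m x • b m) _ (by simp only [hj, zero_smul]),
      b.linear_combination_coord_eq_self]
  rw [← hcomb]
  refine (convex_convexHull ℝ _).sum_mem (fun m _ => hx m) hsum fun m hm => ?_
  exact subset_convexHull ℝ _ ⟨m, (Finset.mem_erase.1 hm).1, rfl⟩

theorem AffineBasis.frontier_convexHull_subset :
    frontier (convexHull ℝ (range b)) ⊆ ⋃ j, convexHull ℝ (b '' {m | m ≠ j}) := by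
  intro x hx
  rw [frontier, ((finite_range b).isClosed_convexHull (𝕜 := ℝ)).closure_eq] at hx
  obtain ⟨hxK, hxint⟩ := hx
  rw [b.interior_convexHull] at hxint
  simp only [mem_ofPred_eq, not_forall, not_lt] at hxint
  obtain ⟨j, hj⟩ := hxint
  have hj0 : b.coord j x = 0 := le_antisymm hj ((b.convexHull_eq_nonneg_coord ▸ hxK) j)
  exact mem_iUnion.2 ⟨j, b.mem_convexHull_facet_of_coord_eq_zero hxK hj0⟩

theorem AffineBasis.interior_convexHull_disjoint_facet (j : ι) :
    Disjoint (interior (convexHull ℝ (range b))) (convexHull ℝ (b '' {m | m ≠ j})) := by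
  have hfacet : convexHull ℝ (b '' {m | m ≠ j}) ⊆ b.coord j ⁻¹' {0} := by
    refine convexHull_min ?_ ((convex_singleton 0).affine_preimage (b.coord j))
    rintro _ ⟨m, hm, rfl⟩
    exact b.coord_apply_ne (Ne.symm hm)
  rw [b.interior_convexHull]
  refine Disjoint.mono_right hfacet (disjoint_left.2 fun x hx hx0 => ?_)
  exact (hx j).ne' hx0

end AffineBasis

namespace IsOpenSimplexWith

variable {n : ℕ} {S : Set (Fin n → ℝ)} {P : Fin (n + 1) → (Fin n → ℝ)} {a : Fin (n + 1)}

theorem affineSpan_eq_top (h : IsOpenSimplexWith S P a) : affineSpan ℝ (range P) = ⊤ :=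
  h.1.affineSpan_eq_top_iff_card_eq_finrank_add_one.2 (by simp)

def affineBasis (h : IsOpenSimplexWith S P a) : AffineBasis (Fin (n + 1)) ℝ (Fin n → ℝ) :=
  ⟨P, h.1, h.affineSpan_eq_top⟩

theorem interior_convexHull_nonempty (h : IsOpenSimplexWith S P a) :
    (interior (convexHull ℝ (range P))).Nonempty :=
  interior_convexHull_nonempty_iff_affineSpan_eq_top.2 h.affineSpan_eq_top

theorem frontier_convexHull_subset (h : IsOpenSimplexWith S P a) :
    frontier (convexHull ℝ (range P)) ⊆ ⋃ j, convexHull ℝ (P '' {m | m ≠ j}) :=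
  h.affineBasis.frontier_convexHull_subset

theorem interior_convexHull_subset (h : IsOpenSimplexWith S P a) :
    interior (convexHull ℝ (range P)) ⊆ S := by
  rw [h.2]
  exact fun x hx => ⟨interior_subset hx,
    disjoint_left.1 (h.affineBasis.interior_convexHull_disjoint_facet a) hx⟩

end IsOpenSimplexWith

theorem stmt_15_general {n : ℕ} {ι : Type*} [Fintype ι] (Δ : Set (Fin n → ℝ))
    (hΔconv : Convex ℝ Δ)
    (P : ι → Fin (n + 1) → (Fin n → ℝ)) (a : ι → Fin (n + 1))
    (S : ι → Set (Fin n → ℝ))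
    (hS : ∀ i, IsOpenSimplexWith (S i) (P i) (a i))
    (hdisj : ∀ i j, i ≠ j → S i ∩ S j = ∅)
    (hcover : Δ = ⋃ i, convexHull ℝ (Set.range (P i)))
    (i₀ : ι)
    (hall : ∀ j, convexHull ℝ (P i₀ '' {m | m ≠ j}) ⊆ frontier Δ) :
    convexHull ℝ (Set.range (P i₀)) = Δ ∧ ∀ i, i = i₀ := by
  have hsub : ∀ i, convexHull ℝ (range (P i)) ⊆ Δ := fun i =>
    hcover ▸ subset_iUnion (fun i => convexHull ℝ (range (P i))) i
  have hK : convexHull ℝ (range (P i₀)) = Δ :=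
    hΔconv.eq_of_subset_of_frontier_subset ((finite_range _).isClosed_convexHull (𝕜 := ℝ))
      (hsub i₀) (hS i₀).interior_convexHull_nonempty
      ((hS i₀).frontier_convexHull_subset.trans (iUnion_subset hall))
  refine ⟨hK, fun i => by_contra fun hne => ?_⟩
  obtain ⟨x, hx⟩ := (hS i).interior_convexHull_nonempty
  have hx₀ : x ∈ interior (convexHull ℝ (range (P i₀))) := hK ▸ interior_mono (hsub i) hx
  exact (hdisj i i₀ hne).subset
    ⟨(hS i).interior_convexHull_subset hx, (hS i₀).interior_convexHull_subset hx₀⟩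

/-- if a compact convex Δ ⊆ ℝⁿ is the union of the closures of finitely
many pairwise disjoint open n-simplices, each with its designated vertex at a vertex of
Δ and with all but at most one facet contained in ∂Δ, and one member Σ_{i₀} has all of
its facets contained in ∂Δ, then its closure equals Δ and the family has exactly one
member. -/
theorem stmt_15 {n : ℕ} {ι : Type*} [Fintype ι] (Δ : Set (Fin n → ℝ))
    (hΔc : IsCompact Δ) (hΔconv : Convex ℝ Δ)
    (P : ι → Fin (n + 1) → (Fin n → ℝ)) (a : ι → Fin (n + 1))
    (S : ι → Set (Fin n → ℝ))
    (hS : ∀ i, IsOpenSimplexWith (S i) (P i) (a i))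
    (hdisj : ∀ i j, i ≠ j → S i ∩ S j = ∅)
    (hcover : Δ = ⋃ i, convexHull ℝ (Set.range (P i)))
    (hvert : ∀ i, P i (a i) ∈ Set.extremePoints ℝ Δ)
    (hfacets : ∀ i, ∃ j₀ : Fin (n + 1), ∀ j, j ≠ j₀ →
      convexHull ℝ (P i '' {m | m ≠ j}) ⊆ frontier Δ)
    (i₀ : ι)
    (hall : ∀ j, convexHull ℝ (P i₀ '' {m | m ≠ j}) ⊆ frontier Δ) :
    convexHull ℝ (Set.range (P i₀)) = Δ ∧ ∀ i, i = i₀ :=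
  stmt_15_general Δ hΔconv P a S hS hdisj hcover i₀ hall
end

section
/- If conv{0, λe₁, λe₂} = T₁ ∪ T₂, where λ·Δ⁰ = conv{0, λe₁, λe₂} ⊂ ℝ² is the standard 2-dimensional Delzant simplex, with T₁, T₂ closed triangles with disjoint interiors, each SL(2,ℤ)-equivalent to a translate of some dᵢ·Δ⁰, and each having a vertex among {0, λe₁, λe₂} with its two adjacent sides along the boundary of the big triangle, then this is impossible; that is, no such decomposition exists. -/
open Matrix Pointwise




lemma mem_hull3 {a b c y : Fin 2 → ℝ} {α β γ : ℝ} (hα : 0 ≤ α) (hβ : 0 ≤ β) (hγ : 0 ≤ γ)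
    (hsum : α + β + γ = 1) (hy : y = α • a + β • b + γ • c) :
    y ∈ convexHull ℝ ({a, b, c} : Set (Fin 2 → ℝ)) := by
  have ha : a ∈ convexHull ℝ ({a, b, c} : Set (Fin 2 → ℝ)) :=
    subset_convexHull _ _ (by simp)
  have hb : b ∈ convexHull ℝ ({a, b, c} : Set (Fin 2 → ℝ)) :=
    subset_convexHull _ _ (by simp)
  have hc : c ∈ convexHull ℝ ({a, b, c} : Set (Fin 2 → ℝ)) :=
    subset_convexHull _ _ (by simp)
  have hconv := convex_convexHull ℝ ({a, b, c} : Set (Fin 2 → ℝ))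
  rcases eq_or_lt_of_le (add_nonneg hβ hγ) with h0 | h0
  · have hβ0 : β = 0 := by linarith
    have hγ0 : γ = 0 := by linarith
    have : α = 1 := by linarith
    subst hy; simp [hβ0, hγ0, this]; exact ha
  · have hz : (β / (β + γ)) • b + (γ / (β + γ)) • c ∈ convexHull ℝ ({a, b, c} : Set (Fin 2 → ℝ)) :=
      hconv hb hc (by positivity) (by positivity) (by field_simp)
    have := hconv ha hz hα (le_of_lt h0) (by linarith)
    convert this using 1
    rw [hy, smul_add, smul_smul, smul_smul]
    have h1 : (β + γ) * (β / (β + γ)) = β := by field_simp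
    have h2 : (β + γ) * (γ / (β + γ)) = γ := by field_simp
    rw [h1, h2, add_assoc]

lemma convex_w0 (l : ℝ) : Convex ℝ {y : Fin 2 → ℝ | 0 ≤ y 0 ∧ 0 ≤ y 1 ∧ y 0 + y 1 ≤ l} := by
  intro u hu v hv a b ha hb hab
  obtain ⟨h1, h2, h3⟩ := hu; obtain ⟨h4, h5, h6⟩ := hv
  have hl : a * l + b * l = l := by rw [← add_mul, hab, one_mul]
  simp only [Set.mem_setOf_eq, Pi.add_apply, Pi.smul_apply, smul_eq_mul]
  refine ⟨by positivity, by positivity,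
    by nlinarith [mul_nonneg ha (sub_nonneg.2 h3), mul_nonneg hb (sub_nonneg.2 h6)]⟩

lemma convex_w1 (l e : ℝ) : Convex ℝ {y : Fin 2 → ℝ | 0 ≤ y 1 ∧ e ≤ y 0 ∧ y 0 + y 1 ≤ l} := by
  intro u hu v hv a b ha hb hab
  obtain ⟨h1, h2, h3⟩ := hu; obtain ⟨h4, h5, h6⟩ := hv
  have hl : a * l + b * l = l := by rw [← add_mul, hab, one_mul]
  have he : a * e + b * e = e := by rw [← add_mul, hab, one_mul]
  simp only [Set.mem_setOf_eq, Pi.add_apply, Pi.smul_apply, smul_eq_mul]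
  refine ⟨by positivity,
    by nlinarith [mul_nonneg ha (sub_nonneg.2 h2), mul_nonneg hb (sub_nonneg.2 h5)],
    by nlinarith [mul_nonneg ha (sub_nonneg.2 h3), mul_nonneg hb (sub_nonneg.2 h6)]⟩

lemma convex_w2 (l e : ℝ) : Convex ℝ {y : Fin 2 → ℝ | 0 ≤ y 0 ∧ e ≤ y 1 ∧ y 0 + y 1 ≤ l} := by
  intro u hu v hv a b ha hb hab
  obtain ⟨h1, h2, h3⟩ := hu; obtain ⟨h4, h5, h6⟩ := hv
  have hl : a * l + b * l = l := by rw [← add_mul, hab, one_mul]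
  have he : a * e + b * e = e := by rw [← add_mul, hab, one_mul]
  simp only [Set.mem_setOf_eq, Pi.add_apply, Pi.smul_apply, smul_eq_mul]
  refine ⟨by positivity,
    by nlinarith [mul_nonneg ha (sub_nonneg.2 h2), mul_nonneg hb (sub_nonneg.2 h5)],
    by nlinarith [mul_nonneg ha (sub_nonneg.2 h3), mul_nonneg hb (sub_nonneg.2 h6)]⟩

lemma int_zero {dd : ℝ} (hd : 0 < dd) {m : ℤ} (h : dd * (m:ℝ) = 0) : m = 0 := by
  have := (mul_eq_zero.mp h).resolve_left hd.ne'
  exact_mod_cast this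

lemma int_nonneg {dd : ℝ} (hd : 0 < dd) {m : ℤ} (h : 0 ≤ dd * (m:ℝ)) : 0 ≤ m := by
  have h' : dd * 0 ≤ dd * (m:ℝ) := by simpa using h
  have := le_of_mul_le_mul_left h' hd
  exact_mod_cast this

lemma int_nonpos {dd : ℝ} (hd : 0 < dd) {m : ℤ} (h : dd * (m:ℝ) ≤ 0) : m ≤ 0 := by
  have h' : dd * (m:ℝ) ≤ dd * 0 := by simpa using h
  have := le_of_mul_le_mul_left h' hd
  exact_mod_cast this

lemma unit_pos {m n : ℤ} (h : m * n = 1 ∨ m * n = -1) (hm : 0 ≤ m) (hn : 0 ≤ n) :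
    m = 1 ∧ n = 1 := by
  have hmn : 0 ≤ m * n := mul_nonneg hm hn
  rcases h with h | h
  · rcases Int.isUnit_iff.mp (IsUnit.of_mul_eq_one n h) with h1 | h1
    · subst h1; omega
    · omega
  · omega

lemma unit_negpos {m n : ℤ} (h : m * n = 1 ∨ m * n = -1) (hm : m ≤ 0) (hn : 0 ≤ n) :
    m = -1 ∧ n = 1 := by
  have h' : (-m) * n = 1 ∨ (-m) * n = -1 := by
    rcases h with h | h
    · right; rw [neg_mul]; omega
    · left; rw [neg_mul]; omega
  obtain ⟨h1, h2⟩ := unit_pos h' (by omega) hn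
  exact ⟨by omega, h2⟩

lemma no_par {z₁ z₂ : Fin 2 → ℤ}
    (hdet : z₁ 0 * z₂ 1 - z₁ 1 * z₂ 0 = 1 ∨ z₁ 0 * z₂ 1 - z₁ 1 * z₂ 0 = -1)
    (h : z₁ 0 * z₂ 1 - z₁ 1 * z₂ 0 = 0) : False := by rcases hdet with h' | h' <;> omega

lemma corner_classify {l dd : ℝ} (hl : 0 < l) (hd : 0 < dd)
    {v w₁ w₂ : Fin 2 → ℝ} {z₁ z₂ : Fin 2 → ℤ}
    (hw₁ : ∀ t, w₁ t = v t + dd * (z₁ t : ℝ)) (hw₂ : ∀ t, w₂ t = v t + dd * (z₂ t : ℝ))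
    (hdet : z₁ 0 * z₂ 1 - z₁ 1 * z₂ 0 = 1 ∨ z₁ 0 * z₂ 1 - z₁ 1 * z₂ 0 = -1)
    (hv : v = ![0,0] ∨ v = ![l,0] ∨ v = ![0,l])
    (hL₁ : (v 0 = 0 ∧ w₁ 0 = 0) ∨ (v 1 = 0 ∧ w₁ 1 = 0) ∨ (v 0 + v 1 = l ∧ w₁ 0 + w₁ 1 = l))
    (hL₂ : (v 0 = 0 ∧ w₂ 0 = 0) ∨ (v 1 = 0 ∧ w₂ 1 = 0) ∨ (v 0 + v 1 = l ∧ w₂ 0 + w₂ 1 = l))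
    (hB₁ : 0 ≤ w₁ 0 ∧ 0 ≤ w₁ 1 ∧ w₁ 0 + w₁ 1 ≤ l)
    (hB₂ : 0 ≤ w₂ 0 ∧ 0 ≤ w₂ 1 ∧ w₂ 0 + w₂ 1 ≤ l) :
    dd ≤ l ∧
      (v = ![0,0] ∧ ({v, w₁, w₂} : Set (Fin 2 → ℝ)) = {![0,0], ![dd,0], ![0,dd]} ∨
       v = ![l,0] ∧ ({v, w₁, w₂} : Set (Fin 2 → ℝ)) = {![l,0], ![l-dd,0], ![l-dd,dd]} ∨
       v = ![0,l] ∧ ({v, w₁, w₂} : Set (Fin 2 → ℝ)) = {![0,l], ![0,l-dd], ![dd,l-dd]}) := by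
  obtain ⟨hB₁0, hB₁1, hB₁s⟩ := hB₁
  obtain ⟨hB₂0, hB₂1, hB₂s⟩ := hB₂
  rcases hv with rfl | rfl | rfl
  · -- v = ![0,0]
    have e10 : w₁ 0 = dd * (z₁ 0 : ℝ) := by simpa using hw₁ 0
    have e11 : w₁ 1 = dd * (z₁ 1 : ℝ) := by simpa using hw₁ 1
    have e20 : w₂ 0 = dd * (z₂ 0 : ℝ) := by simpa using hw₂ 0
    have e21 : w₂ 1 = dd * (z₂ 1 : ℝ) := by simpa using hw₂ 1
    have K₁ : z₁ 0 = 0 ∨ z₁ 1 = 0 := by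
      rcases hL₁ with ⟨-, h⟩ | ⟨-, h⟩ | ⟨h, -⟩
      · exact Or.inl (int_zero hd (by linarith))
      · exact Or.inr (int_zero hd (by linarith))
      · exfalso; simp at h; linarith
    have K₂ : z₂ 0 = 0 ∨ z₂ 1 = 0 := by
      rcases hL₂ with ⟨-, h⟩ | ⟨-, h⟩ | ⟨h, -⟩
      · exact Or.inl (int_zero hd (by linarith))
      · exact Or.inr (int_zero hd (by linarith))
      · exfalso; simp at h; linarith
    rcases K₁ with k₁ | k₁ <;> rcases K₂ with k₂ | k₂
    · exact absurd (by rw [k₁, k₂]; ring) (no_par hdet · |>.elim)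
    · -- z₁ 0 = 0, z₂ 1 = 0 : w₁ = ![0,dd], w₂ = ![dd,0]
      have hdet' : z₁ 1 * z₂ 0 = 1 ∨ z₁ 1 * z₂ 0 = -1 := by
        rcases hdet with h | h
        · right; rw [k₁, k₂] at h; omega
        · left; rw [k₁, k₂] at h; omega
      obtain ⟨hz11, hz20⟩ := unit_pos hdet'
        (int_nonneg hd (by linarith)) (int_nonneg hd (by linarith))
      have hw1 : w₁ = ![0, dd] := by
        funext t; fin_cases t
        · show w₁ 0 = _; rw [e10, k₁]; simp
        · show w₁ 1 = _; rw [e11, hz11]; simp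
      have hw2 : w₂ = ![dd, 0] := by
        funext t; fin_cases t
        · show w₂ 0 = _; rw [e20, hz20]; simp
        · show w₂ 1 = _; rw [e21, k₂]; simp
      refine ⟨by rw [e11, hz11] at hB₁s; push_cast at hB₁s; linarith, Or.inl ⟨rfl, ?_⟩⟩
      rw [hw1, hw2, Set.pair_comm]
    · -- z₁ 1 = 0, z₂ 0 = 0 : w₁ = ![dd,0], w₂ = ![0,dd]
      have hdet' : z₁ 0 * z₂ 1 = 1 ∨ z₁ 0 * z₂ 1 = -1 := by
        rcases hdet with h | h
        · left; rw [k₁, k₂] at h; omega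
        · right; rw [k₁, k₂] at h; omega
      obtain ⟨hz10, hz21⟩ := unit_pos hdet'
        (int_nonneg hd (by linarith)) (int_nonneg hd (by linarith))
      have hw1 : w₁ = ![dd, 0] := by
        funext t; fin_cases t
        · show w₁ 0 = _; rw [e10, hz10]; simp
        · show w₁ 1 = _; rw [e11, k₁]; simp
      have hw2 : w₂ = ![0, dd] := by
        funext t; fin_cases t
        · show w₂ 0 = _; rw [e20, k₂]; simp
        · show w₂ 1 = _; rw [e21, hz21]; simp
      refine ⟨by rw [e10, hz10] at hB₁s; rw [e11, k₁] at hB₁s; push_cast at hB₁s; linarith,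
        Or.inl ⟨rfl, by rw [hw1, hw2]⟩⟩
    · exact absurd (by rw [k₁, k₂]; ring) (no_par hdet · |>.elim)
  · -- v = ![l,0]
    have e10 : w₁ 0 = l + dd * (z₁ 0 : ℝ) := by simpa using hw₁ 0
    have e11 : w₁ 1 = dd * (z₁ 1 : ℝ) := by simpa using hw₁ 1
    have e20 : w₂ 0 = l + dd * (z₂ 0 : ℝ) := by simpa using hw₂ 0
    have e21 : w₂ 1 = dd * (z₂ 1 : ℝ) := by simpa using hw₂ 1
    have K₁ : z₁ 1 = 0 ∨ z₁ 0 + z₁ 1 = 0 := by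
      rcases hL₁ with ⟨h, -⟩ | ⟨-, h⟩ | ⟨-, h⟩
      · exfalso; simp at h; linarith
      · exact Or.inl (int_zero hd (by linarith))
      · refine Or.inr (int_zero hd ?_); push_cast; linarith
    have K₂ : z₂ 1 = 0 ∨ z₂ 0 + z₂ 1 = 0 := by
      rcases hL₂ with ⟨h, -⟩ | ⟨-, h⟩ | ⟨-, h⟩
      · exfalso; simp at h; linarith
      · exact Or.inl (int_zero hd (by linarith))
      · refine Or.inr (int_zero hd ?_); push_cast; linarith
    rcases K₁ with k₁ | k₁ <;> rcases K₂ with k₂ | k₂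
    · exact absurd (by rw [k₁, k₂]; ring) (no_par hdet · |>.elim)
    · -- w₁ on bottom, w₂ on hypotenuse
      have hdet' : z₁ 0 * z₂ 1 = 1 ∨ z₁ 0 * z₂ 1 = -1 := by
        rcases hdet with h | h
        · left; rw [k₁] at h; omega
        · right; rw [k₁] at h; omega
      obtain ⟨hz10, hz21⟩ := unit_negpos hdet'
        (int_nonpos hd (by linarith)) (int_nonneg hd (by linarith))
      have hz20 : z₂ 0 = -1 := by omega
      have hw1 : w₁ = ![l - dd, 0] := by
        funext t; fin_cases t
        · show w₁ 0 = _; rw [e10, hz10]; push_cast; simp; ring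
        · show w₁ 1 = _; rw [e11, k₁]; simp
      have hw2 : w₂ = ![l - dd, dd] := by
        funext t; fin_cases t
        · show w₂ 0 = _; rw [e20, hz20]; push_cast; simp; ring
        · show w₂ 1 = _; rw [e21, hz21]; simp
      refine ⟨by rw [e10, hz10] at hB₁0; push_cast at hB₁0; linarith,
        Or.inr (Or.inl ⟨rfl, by rw [hw1, hw2]⟩)⟩
    · -- w₂ on bottom, w₁ on hypotenuse
      have hdet' : z₂ 0 * z₁ 1 = 1 ∨ z₂ 0 * z₁ 1 = -1 := by
        rcases hdet with h | h
        · rw [k₂] at h; right; rw [mul_comm]; omega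
        · rw [k₂] at h; left; rw [mul_comm]; omega
      obtain ⟨hz20, hz11⟩ := unit_negpos hdet'
        (int_nonpos hd (by linarith)) (int_nonneg hd (by linarith))
      have hz10 : z₁ 0 = -1 := by omega
      have hw1 : w₁ = ![l - dd, dd] := by
        funext t; fin_cases t
        · show w₁ 0 = _; rw [e10, hz10]; push_cast; simp; ring
        · show w₁ 1 = _; rw [e11, hz11]; simp
      have hw2 : w₂ = ![l - dd, 0] := by
        funext t; fin_cases t
        · show w₂ 0 = _; rw [e20, hz20]; push_cast; simp; ring
        · show w₂ 1 = _; rw [e21, k₂]; simp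
      refine ⟨by rw [e20, hz20] at hB₂0; push_cast at hB₂0; linarith,
        Or.inr (Or.inl ⟨rfl, ?_⟩)⟩
      rw [hw1, hw2, Set.pair_comm]
    · refine absurd ?_ (no_par hdet · |>.elim)
      have h1 : z₁ 1 = -z₁ 0 := by omega
      have h2 : z₂ 1 = -z₂ 0 := by omega
      rw [h1, h2]; ring
  · -- v = ![0,l]
    have e10 : w₁ 0 = dd * (z₁ 0 : ℝ) := by simpa using hw₁ 0
    have e11 : w₁ 1 = l + dd * (z₁ 1 : ℝ) := by simpa using hw₁ 1
    have e20 : w₂ 0 = dd * (z₂ 0 : ℝ) := by simpa using hw₂ 0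
    have e21 : w₂ 1 = l + dd * (z₂ 1 : ℝ) := by simpa using hw₂ 1
    have K₁ : z₁ 0 = 0 ∨ z₁ 0 + z₁ 1 = 0 := by
      rcases hL₁ with ⟨-, h⟩ | ⟨h, -⟩ | ⟨-, h⟩
      · exact Or.inl (int_zero hd (by linarith))
      · exfalso; simp at h; linarith
      · refine Or.inr (int_zero hd ?_); push_cast; linarith
    have K₂ : z₂ 0 = 0 ∨ z₂ 0 + z₂ 1 = 0 := by
      rcases hL₂ with ⟨-, h⟩ | ⟨h, -⟩ | ⟨-, h⟩
      · exact Or.inl (int_zero hd (by linarith))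
      · exfalso; simp at h; linarith
      · refine Or.inr (int_zero hd ?_); push_cast; linarith
    rcases K₁ with k₁ | k₁ <;> rcases K₂ with k₂ | k₂
    · exact absurd (by rw [k₁, k₂]; ring) (no_par hdet · |>.elim)
    · -- w₁ on left edge, w₂ on hypotenuse
      have hdet' : z₁ 1 * z₂ 0 = 1 ∨ z₁ 1 * z₂ 0 = -1 := by
        rcases hdet with h | h
        · right; rw [k₁] at h; omega
        · left; rw [k₁] at h; omega
      obtain ⟨hz11, hz20⟩ := unit_negpos hdet'
        (int_nonpos hd (by linarith)) (int_nonneg hd (by linarith))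
      have hz21 : z₂ 1 = -1 := by omega
      have hw1 : w₁ = ![0, l - dd] := by
        funext t; fin_cases t
        · show w₁ 0 = _; rw [e10, k₁]; simp
        · show w₁ 1 = _; rw [e11, hz11]; push_cast; simp; ring
      have hw2 : w₂ = ![dd, l - dd] := by
        funext t; fin_cases t
        · show w₂ 0 = _; rw [e20, hz20]; simp
        · show w₂ 1 = _; rw [e21, hz21]; push_cast; simp; ring
      refine ⟨by rw [e11, hz11] at hB₁1; push_cast at hB₁1; linarith,
        Or.inr (Or.inr ⟨rfl, by rw [hw1, hw2]⟩)⟩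
    · -- w₂ on left edge, w₁ on hypotenuse
      have hdet' : z₂ 1 * z₁ 0 = 1 ∨ z₂ 1 * z₁ 0 = -1 := by
        rcases hdet with h | h
        · rw [k₂] at h; left; rw [mul_comm]; omega
        · rw [k₂] at h; right; rw [mul_comm]; omega
      obtain ⟨hz21, hz10⟩ := unit_negpos hdet'
        (int_nonpos hd (by linarith)) (int_nonneg hd (by linarith))
      have hz11 : z₁ 1 = -1 := by omega
      have hw1 : w₁ = ![dd, l - dd] := by
        funext t; fin_cases t
        · show w₁ 0 = _; rw [e10, hz10]; simp
        · show w₁ 1 = _; rw [e11, hz11]; push_cast; simp; ring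
      have hw2 : w₂ = ![0, l - dd] := by
        funext t; fin_cases t
        · show w₂ 0 = _; rw [e20, k₂]; simp
        · show w₂ 1 = _; rw [e21, hz21]; push_cast; simp; ring
      refine ⟨by rw [e21, hz21] at hB₂1; push_cast at hB₂1; linarith,
        Or.inr (Or.inr ⟨rfl, ?_⟩)⟩
      rw [hw1, hw2, Set.pair_comm]
    · refine absurd ?_ (no_par hdet · |>.elim)
      have h1 : z₁ 1 = -z₁ 0 := by omega
      have h2 : z₂ 1 = -z₂ 0 := by omega
      rw [h1, h2]; ring







lemma corner1_eq {l dd : ℝ} (hd : 0 < dd) :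
    convexHull ℝ ({![l,0], ![l-dd,0], ![l-dd,dd]} : Set (Fin 2 → ℝ)) =
      {y : Fin 2 → ℝ | 0 ≤ y 1 ∧ l - dd ≤ y 0 ∧ y 0 + y 1 ≤ l} := by
  apply Set.Subset.antisymm
  · apply convexHull_min _ (convex_w1 l (l - dd))
    rintro y (rfl | rfl | rfl) <;>
      simp only [Set.mem_setOf_eq, Matrix.cons_val_zero, Matrix.cons_val_one, Matrix.head_cons] <;>
      refine ⟨by linarith, by linarith, by linarith⟩
  · rintro y ⟨h0, h1, h2⟩
    refine mem_hull3 (α := (y 0 - l + dd)/dd) (β := (l - y 0 - y 1)/dd) (γ := y 1 / dd)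
      (by apply div_nonneg _ hd.le; linarith) (by apply div_nonneg _ hd.le; linarith)
      (by positivity) (by field_simp; ring) ?_
    funext t
    fin_cases t <;>
      simp only [Fin.isValue, Pi.add_apply, Pi.smul_apply, smul_eq_mul,
        Matrix.cons_val_zero, Matrix.cons_val_one, Matrix.head_cons, Fin.zero_eta, Fin.mk_one] <;>
      field_simp <;> ring

lemma corner2_eq {l dd : ℝ} (hd : 0 < dd) :
    convexHull ℝ ({![0,l], ![0,l-dd], ![dd,l-dd]} : Set (Fin 2 → ℝ)) =
      {y : Fin 2 → ℝ | 0 ≤ y 0 ∧ l - dd ≤ y 1 ∧ y 0 + y 1 ≤ l} := by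
  apply Set.Subset.antisymm
  · apply convexHull_min _ (convex_w2 l (l - dd))
    rintro y (rfl | rfl | rfl) <;>
      simp only [Set.mem_setOf_eq, Matrix.cons_val_zero, Matrix.cons_val_one, Matrix.head_cons] <;>
      refine ⟨by linarith, by linarith, by linarith⟩
  · rintro y ⟨h0, h1, h2⟩
    refine mem_hull3 (α := (y 1 - l + dd)/dd) (β := (l - y 0 - y 1)/dd) (γ := y 0 / dd)
      (by apply div_nonneg _ hd.le; linarith) (by apply div_nonneg _ hd.le; linarith)
      (by positivity) (by field_simp; ring) ?_
    funext t
    fin_cases t <;>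
      simp only [Fin.isValue, Pi.add_apply, Pi.smul_apply, smul_eq_mul,
        Matrix.cons_val_zero, Matrix.cons_val_one, Matrix.head_cons, Fin.zero_eta, Fin.mk_one] <;>
      field_simp <;> ring

lemma big_eq {l : ℝ} (hl : 0 < l) :
    convexHull ℝ ({![0,0], ![l,0], ![0,l]} : Set (Fin 2 → ℝ)) =
      {y : Fin 2 → ℝ | 0 ≤ y 0 ∧ 0 ≤ y 1 ∧ y 0 + y 1 ≤ l} := by
  apply Set.Subset.antisymm
  · apply convexHull_min _ (convex_w0 l)
    rintro y (rfl | rfl | rfl) <;> simp <;> positivity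
  · rintro y ⟨h0, h1, h2⟩
    refine mem_hull3 (α := 1 - (y 0 + y 1)/l) (β := y 0 / l) (γ := y 1 / l)
      (by rw [sub_nonneg]; apply div_le_one_of_le₀ h2 hl.le) (by positivity) (by positivity)
      (by ring) ?_
    funext t
    fin_cases t <;> simp <;> field_simp



lemma tri_closed (s : Set (Fin 2 → ℝ)) (a b c : Fin 2 → ℝ) (hs : s = {a, b, c}) :
    IsClosed (convexHull ℝ s) := by
  subst hs
  exact ((((Set.finite_singleton c).insert b).insert a).isCompact_convexHull ℝ).isClosed

lemma open_strict0 (l e : ℝ) : IsOpen {y : Fin 2 → ℝ | e < y 0 ∧ 0 < y 1 ∧ y 0 + y 1 < l} := by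
  have h1 : IsOpen {y : Fin 2 → ℝ | e < y 0} := isOpen_lt continuous_const (continuous_apply 0)
  have h2 : IsOpen {y : Fin 2 → ℝ | 0 < y 1} := isOpen_lt continuous_const (continuous_apply 1)
  have h3 : IsOpen {y : Fin 2 → ℝ | y 0 + y 1 < l} :=
    isOpen_lt ((continuous_apply 0).add (continuous_apply 1)) continuous_const
  have : {y : Fin 2 → ℝ | e < y 0 ∧ 0 < y 1 ∧ y 0 + y 1 < l}
      = {y : Fin 2 → ℝ | e < y 0} ∩ ({y : Fin 2 → ℝ | 0 < y 1} ∩ {y | y 0 + y 1 < l}) := by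
    ext z; simp [Set.mem_setOf_eq, and_assoc]
  rw [this]; exact h1.inter (h2.inter h3)

lemma strict_sub_interior_big {l : ℝ} (hl : 0 < l) :
    {y : Fin 2 → ℝ | 0 < y 0 ∧ 0 < y 1 ∧ y 0 + y 1 < l} ⊆
      interior (convexHull ℝ ({![0,0], ![l,0], ![0,l]} : Set (Fin 2 → ℝ))) := by
  apply interior_maximal _ (open_strict0 l 0)
  rw [big_eq hl]
  rintro y ⟨h0, h1, h2⟩; exact ⟨h0.le, h1.le, h2.le⟩

lemma frontier_big {l : ℝ} (hl : 0 < l) :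
    frontier (convexHull ℝ ({![0,0], ![l,0], ![0,l]} : Set (Fin 2 → ℝ))) ⊆
      {y : Fin 2 → ℝ | (0 ≤ y 0 ∧ 0 ≤ y 1 ∧ y 0 + y 1 ≤ l) ∧
        (y 0 = 0 ∨ y 1 = 0 ∨ y 0 + y 1 = l)} := by
  intro y hy
  have h1 : y ∈ convexHull ℝ ({![0,0], ![l,0], ![0,l]} : Set (Fin 2 → ℝ)) :=
    (tri_closed _ _ _ _ rfl).frontier_subset hy
  have h2 : y ∉ interior (convexHull ℝ ({![0,0], ![l,0], ![0,l]} : Set (Fin 2 → ℝ))) := by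
    rw [frontier] at hy; exact hy.2
  have h3 : ¬ (0 < y 0 ∧ 0 < y 1 ∧ y 0 + y 1 < l) := fun h => h2 (strict_sub_interior_big hl h)
  rw [big_eq hl] at h1
  obtain ⟨w0, w1, w2⟩ := h1
  push_neg at h3
  refine ⟨⟨w0, w1, w2⟩, ?_⟩
  rcases eq_or_lt_of_le w0 with h | h
  · exact Or.inl h.symm
  rcases eq_or_lt_of_le w1 with h' | h'
  · exact Or.inr (Or.inl h'.symm)
  have := h3 h h'
  exact Or.inr (Or.inr (le_antisymm w2 this))



lemma edge_line {l : ℝ} (hl : 0 < l) {a b : Fin 2 → ℝ}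
    (h : convexHull ℝ ({a, b} : Set (Fin 2 → ℝ)) ⊆
      frontier (convexHull ℝ ({![0,0], ![l,0], ![0,l]} : Set (Fin 2 → ℝ)))) :
    ((a 0 = 0 ∧ b 0 = 0) ∨ (a 1 = 0 ∧ b 1 = 0) ∨ (a 0 + a 1 = l ∧ b 0 + b 1 = l)) ∧
    (0 ≤ a 0 ∧ 0 ≤ a 1 ∧ a 0 + a 1 ≤ l) ∧ (0 ≤ b 0 ∧ 0 ≤ b 1 ∧ b 0 + b 1 ≤ l) := by
  have ha := frontier_big hl (h (subset_convexHull ℝ _ (by simp : a ∈ ({a, b} : Set (Fin 2 → ℝ)))))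
  have hb := frontier_big hl (h (subset_convexHull ℝ _ (by simp : b ∈ ({a, b} : Set (Fin 2 → ℝ)))))
  have hmmem : (1/2 : ℝ) • a + (1/2 : ℝ) • b ∈ convexHull ℝ ({a, b} : Set (Fin 2 → ℝ)) := by
    rw [convexHull_pair]
    exact ⟨1/2, 1/2, by norm_num, by norm_num, by norm_num, rfl⟩
  have hm := frontier_big hl (h hmmem)
  simp only [Set.mem_setOf_eq, Pi.add_apply, Pi.smul_apply, smul_eq_mul] at ha hb hm
  obtain ⟨⟨a0, a1, a2⟩, -⟩ := ha
  obtain ⟨⟨b0, b1, b2⟩, -⟩ := hb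
  refine ⟨?_, ⟨a0, a1, a2⟩, ⟨b0, b1, b2⟩⟩
  rcases hm.2 with h' | h' | h'
  · exact Or.inl ⟨by linarith, by linarith⟩
  · exact Or.inr (Or.inl ⟨by linarith, by linarith⟩)
  · exact Or.inr (Or.inr ⟨by linarith, by linarith⟩)




lemma open_strict2 (l e : ℝ) : IsOpen {y : Fin 2 → ℝ | 0 < y 0 ∧ e < y 1 ∧ y 0 + y 1 < l} := by
  have h1 : IsOpen {y : Fin 2 → ℝ | 0 < y 0} := isOpen_lt continuous_const (continuous_apply 0)
  have h2 : IsOpen {y : Fin 2 → ℝ | e < y 1} := isOpen_lt continuous_const (continuous_apply 1)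
  have h3 : IsOpen {y : Fin 2 → ℝ | y 0 + y 1 < l} :=
    isOpen_lt ((continuous_apply 0).add (continuous_apply 1)) continuous_const
  have : {y : Fin 2 → ℝ | 0 < y 0 ∧ e < y 1 ∧ y 0 + y 1 < l}
      = {y : Fin 2 → ℝ | 0 < y 0} ∩ ({y : Fin 2 → ℝ | e < y 1} ∩ {y | y 0 + y 1 < l}) := by
    ext z; simp [Set.mem_setOf_eq, and_assoc]
  rw [this]; exact h1.inter (h2.inter h3)

lemma strict_sub_interior_c1 {l dd : ℝ} (hd : 0 < dd) :
    {y : Fin 2 → ℝ | l - dd < y 0 ∧ 0 < y 1 ∧ y 0 + y 1 < l} ⊆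
      interior (convexHull ℝ ({![l,0], ![l-dd,0], ![l-dd,dd]} : Set (Fin 2 → ℝ))) := by
  apply interior_maximal _ (open_strict0 l (l - dd))
  rw [corner1_eq hd]
  rintro y ⟨h0, h1, h2⟩; exact ⟨h1.le, h0.le, h2.le⟩

lemma strict_sub_interior_c2 {l dd : ℝ} (hd : 0 < dd) :
    {y : Fin 2 → ℝ | 0 < y 0 ∧ l - dd < y 1 ∧ y 0 + y 1 < l} ⊆
      interior (convexHull ℝ ({![0,l], ![0,l-dd], ![dd,l-dd]} : Set (Fin 2 → ℝ))) := by
  apply interior_maximal _ (open_strict2 l (l - dd))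
  rw [corner2_eq hd]
  rintro y ⟨h0, h1, h2⟩; exact ⟨h0.le, h1.le, h2.le⟩

lemma image_tri (M : Matrix (Fin 2) (Fin 2) ℤ) (x : Fin 2 → ℝ) (dd : ℝ) :
    (fun y => M.map (Int.cast : ℤ → ℝ) *ᵥ y + x) ''
      (dd • convexHull ℝ ({![0, 0], ![1, 0], ![0, 1]} : Set (Fin 2 → ℝ))) =
    convexHull ℝ {M.map (Int.cast : ℤ → ℝ) *ᵥ (dd • ![0, 0]) + x,
      M.map (Int.cast : ℤ → ℝ) *ᵥ (dd • ![1, 0]) + x,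
      M.map (Int.cast : ℤ → ℝ) *ᵥ (dd • ![0, 1]) + x} := by
  have haff : ∃ f : (Fin 2 → ℝ) →ᵃ[ℝ] (Fin 2 → ℝ),
      ∀ y, f y = M.map (Int.cast : ℤ → ℝ) *ᵥ y + x := by
    refine ⟨⟨fun y => M.map (Int.cast : ℤ → ℝ) *ᵥ y + x, (M.map (Int.cast : ℤ → ℝ)).mulVecLin, ?_⟩,
      fun y => rfl⟩
    intro p v
    simp [Matrix.mulVecLin, Matrix.mulVec_add]
    abel_nf; trivial
  obtain ⟨f, hf⟩ := haff
  have himg : (fun y => M.map (Int.cast : ℤ → ℝ) *ᵥ y + x) = f := by funext y; rw [hf]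
  rw [himg, ← convexHull_smul, f.image_convexHull]
  congr 1
  rw [Set.smul_set_insert, Set.smul_set_insert, Set.smul_set_singleton,
    Set.image_insert_eq, Set.image_insert_eq, Set.image_singleton]
  simp only [hf]



lemma key_tri {lam dd : ℝ} (hlam : 0 < lam) (hd : 0 < dd)
    {M : Matrix (Fin 2) (Fin 2) ℤ} (hM : M.det = 1 ∨ M.det = -1)
    {x : Fin 2 → ℝ} {q : Fin 3 → Fin 2 → ℝ}
    (h0 : ∀ t, q 0 t = x t)
    (h1 : ∀ t, q 1 t = x t + dd * (M t 0 : ℝ))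
    (h2 : ∀ t, q 2 t = x t + dd * (M t 1 : ℝ))
    (hjex : ∃ j, q j ∈ ({![0,0], ![lam,0], ![0,lam]} : Set (Fin 2 → ℝ)) ∧ ∀ k, k ≠ j →
      convexHull ℝ (q '' {m | m ≠ k}) ⊆
        frontier (convexHull ℝ ({![0,0], ![lam,0], ![0,lam]} : Set (Fin 2 → ℝ)))) :
    dd ≤ lam ∧
      (convexHull ℝ ({q 0, q 1, q 2} : Set (Fin 2 → ℝ)) = convexHull ℝ {![0,0],![dd,0],![0,dd]} ∨
       convexHull ℝ ({q 0, q 1, q 2} : Set (Fin 2 → ℝ))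
         = convexHull ℝ {![lam,0],![lam-dd,0],![lam-dd,dd]} ∨
       convexHull ℝ ({q 0, q 1, q 2} : Set (Fin 2 → ℝ))
         = convexHull ℝ {![0,lam],![0,lam-dd],![dd,lam-dd]}) := by
  obtain ⟨j, hjmem, hedges⟩ := hjex
  simp only [Set.mem_insert_iff, Set.mem_singleton_iff] at hjmem
  rw [Matrix.det_fin_two] at hM
  fin_cases j
  · -- j = 0
    have s1 : q '' {m | m ≠ 1} = {q 0, q 2} := by
      have hs : {m : Fin 3 | m ≠ 1} = ({0, 2} : Set (Fin 3)) := by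
        ext m; fin_cases m <;> simp
      rw [hs, Set.image_insert_eq, Set.image_singleton]
    have s2 : q '' {m | m ≠ 2} = {q 0, q 1} := by
      have hs : {m : Fin 3 | m ≠ 2} = ({0, 1} : Set (Fin 3)) := by
        ext m; fin_cases m <;> simp
      rw [hs, Set.image_insert_eq, Set.image_singleton]
    have he2 := hedges 1 (by decide); rw [s1] at he2
    have he1 := hedges 2 (by decide); rw [s2] at he1
    have E1 := edge_line hlam he1
    have E2 := edge_line hlam he2
    obtain ⟨hdl, hset⟩ := corner_classify (v := q 0) (w₁ := q 1) (w₂ := q 2)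
      (z₁ := fun t => M t 0) (z₂ := fun t => M t 1) hlam hd
      (fun t => by rw [h1 t, h0 t]) (fun t => by rw [h2 t, h0 t])
      (by rcases hM with h | h
          · left; linear_combination h
          · right; linear_combination h)
      hjmem E1.1 E2.1 E1.2.2 E2.2.2
    refine ⟨hdl, ?_⟩
    rcases hset with ⟨-, hs⟩ | ⟨-, hs⟩ | ⟨-, hs⟩
    · left; rw [hs]
    · right; left; rw [hs]
    · right; right; rw [hs]
  · -- j = 1
    have s2 : q '' {m | m ≠ 0} = {q 1, q 2} := by
      have hs : {m : Fin 3 | m ≠ 0} = ({1, 2} : Set (Fin 3)) := by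
        ext m; fin_cases m <;> simp
      rw [hs, Set.image_insert_eq, Set.image_singleton]
    have s1 : q '' {m | m ≠ 2} = {q 1, q 0} := by
      have hs : {m : Fin 3 | m ≠ 2} = ({0, 1} : Set (Fin 3)) := by
        ext m; fin_cases m <;> simp
      rw [hs, Set.image_insert_eq, Set.image_singleton, Set.pair_comm]
    have he2 := hedges 0 (by decide); rw [s2] at he2
    have he1 := hedges 2 (by decide); rw [s1] at he1
    have E1 := edge_line hlam he1
    have E2 := edge_line hlam he2
    obtain ⟨hdl, hset⟩ := corner_classify (v := q 1) (w₁ := q 0) (w₂ := q 2)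
      (z₁ := fun t => -M t 0) (z₂ := fun t => M t 1 - M t 0) hlam hd
      (fun t => by have a1 := h1 t; have a0 := h0 t; push_cast; linarith)
      (fun t => by have a1 := h1 t; have a2 := h2 t; push_cast; linarith)
      (by rcases hM with h | h
          · right; linear_combination -h
          · left; linear_combination -h)
      hjmem E1.1 E2.1 E1.2.2 E2.2.2
    have hre : ({q 0, q 1, q 2} : Set (Fin 2 → ℝ)) = {q 1, q 0, q 2} := Set.insert_comm _ _ _
    refine ⟨hdl, ?_⟩
    rcases hset with ⟨-, hs⟩ | ⟨-, hs⟩ | ⟨-, hs⟩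
    · left; rw [hre, hs]
    · right; left; rw [hre, hs]
    · right; right; rw [hre, hs]
  · -- j = 2
    have s2 : q '' {m | m ≠ 0} = {q 2, q 1} := by
      have hs : {m : Fin 3 | m ≠ 0} = ({1, 2} : Set (Fin 3)) := by
        ext m; fin_cases m <;> simp
      rw [hs, Set.image_insert_eq, Set.image_singleton, Set.pair_comm]
    have s1 : q '' {m | m ≠ 1} = {q 2, q 0} := by
      have hs : {m : Fin 3 | m ≠ 1} = ({0, 2} : Set (Fin 3)) := by
        ext m; fin_cases m <;> simp
      rw [hs, Set.image_insert_eq, Set.image_singleton, Set.pair_comm]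
    have he2 := hedges 0 (by decide); rw [s2] at he2
    have he1 := hedges 1 (by decide); rw [s1] at he1
    have E1 := edge_line hlam he1
    have E2 := edge_line hlam he2
    obtain ⟨hdl, hset⟩ := corner_classify (v := q 2) (w₁ := q 0) (w₂ := q 1)
      (z₁ := fun t => -M t 1) (z₂ := fun t => M t 0 - M t 1) hlam hd
      (fun t => by have a1 := h2 t; have a0 := h0 t; push_cast; linarith)
      (fun t => by have a1 := h1 t; have a2 := h2 t; push_cast; linarith)
      (by rcases hM with h | h
          · left; linear_combination h
          · right; linear_combination h)
      hjmem E1.1 E2.1 E1.2.2 E2.2.2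
    have hre : ({q 0, q 1, q 2} : Set (Fin 2 → ℝ)) = {q 2, q 0, q 1} := by
      rw [Set.pair_comm (q 1) (q 2), Set.insert_comm (q 0) (q 2)]
    refine ⟨hdl, ?_⟩
    rcases hset with ⟨-, hs⟩ | ⟨-, hs⟩ | ⟨-, hs⟩
    · left; rw [hre, hs]
    · right; left; rw [hre, hs]
    · right; right; rw [hre, hs]







section PairCases
variable {lam d0 d1 : ℝ} {T0 T1 : Set (Fin 2 → ℝ)}

lemma pc_contra (hdisj : interior T0 ∩ interior T1 = ∅) {q : Fin 2 → ℝ}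
    (hq0 : q ∈ interior T0) (hq1 : q ∈ interior T1) : False :=
  Set.eq_empty_iff_forall_notMem.mp hdisj q ⟨hq0, hq1⟩

lemma pc00 (hlam : 0 < lam) (h0 : 0 < d0) (h1 : 0 < d1) (h0l : d0 ≤ lam) (h1l : d1 ≤ lam)
    (e0 : T0 = convexHull ℝ ({![0,0], ![d0,0], ![0,d0]} : Set (Fin 2 → ℝ)))
    (e1 : T1 = convexHull ℝ ({![0,0], ![d1,0], ![0,d1]} : Set (Fin 2 → ℝ)))
    (hdisj : interior T0 ∩ interior T1 = ∅) : False := by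
  set m := min d0 d1 with hm
  have hm0 : 0 < m := lt_min h0 h1
  have hm1 : m ≤ d0 := min_le_left _ _
  have hm2 : m ≤ d1 := min_le_right _ _
  refine pc_contra hdisj (q := ![m/4, m/4]) ?_ ?_
  · rw [e0]
    apply strict_sub_interior_big h0
    simp only [Set.mem_setOf_eq, Matrix.cons_val_zero, Matrix.cons_val_one, Matrix.head_cons]
    refine ⟨by linarith, by linarith, by linarith⟩
  · rw [e1]
    apply strict_sub_interior_big h1
    simp only [Set.mem_setOf_eq, Matrix.cons_val_zero, Matrix.cons_val_one, Matrix.head_cons]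
    refine ⟨by linarith, by linarith, by linarith⟩

lemma pc11 (hlam : 0 < lam) (h0 : 0 < d0) (h1 : 0 < d1) (h0l : d0 ≤ lam) (h1l : d1 ≤ lam)
    (e0 : T0 = convexHull ℝ ({![lam,0], ![lam-d0,0], ![lam-d0,d0]} : Set (Fin 2 → ℝ)))
    (e1 : T1 = convexHull ℝ ({![lam,0], ![lam-d1,0], ![lam-d1,d1]} : Set (Fin 2 → ℝ)))
    (hdisj : interior T0 ∩ interior T1 = ∅) : False := by
  set m := min d0 d1 with hm
  have hm0 : 0 < m := lt_min h0 h1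
  have hm1 : m ≤ d0 := min_le_left _ _
  have hm2 : m ≤ d1 := min_le_right _ _
  refine pc_contra hdisj (q := ![lam - m/2, m/4]) ?_ ?_
  · rw [e0]
    apply strict_sub_interior_c1 h0
    simp only [Set.mem_setOf_eq, Matrix.cons_val_zero, Matrix.cons_val_one, Matrix.head_cons]
    refine ⟨by linarith, by linarith, by linarith⟩
  · rw [e1]
    apply strict_sub_interior_c1 h1
    simp only [Set.mem_setOf_eq, Matrix.cons_val_zero, Matrix.cons_val_one, Matrix.head_cons]
    refine ⟨by linarith, by linarith, by linarith⟩

lemma pc22 (hlam : 0 < lam) (h0 : 0 < d0) (h1 : 0 < d1) (h0l : d0 ≤ lam) (h1l : d1 ≤ lam)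
    (e0 : T0 = convexHull ℝ ({![0,lam], ![0,lam-d0], ![d0,lam-d0]} : Set (Fin 2 → ℝ)))
    (e1 : T1 = convexHull ℝ ({![0,lam], ![0,lam-d1], ![d1,lam-d1]} : Set (Fin 2 → ℝ)))
    (hdisj : interior T0 ∩ interior T1 = ∅) : False := by
  set m := min d0 d1 with hm
  have hm0 : 0 < m := lt_min h0 h1
  have hm1 : m ≤ d0 := min_le_left _ _
  have hm2 : m ≤ d1 := min_le_right _ _
  refine pc_contra hdisj (q := ![m/4, lam - m/2]) ?_ ?_
  · rw [e0]
    apply strict_sub_interior_c2 h0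
    simp only [Set.mem_setOf_eq, Matrix.cons_val_zero, Matrix.cons_val_one, Matrix.head_cons]
    refine ⟨by linarith, by linarith, by linarith⟩
  · rw [e1]
    apply strict_sub_interior_c2 h1
    simp only [Set.mem_setOf_eq, Matrix.cons_val_zero, Matrix.cons_val_one, Matrix.head_cons]
    refine ⟨by linarith, by linarith, by linarith⟩

lemma pc01 (hlam : 0 < lam) (h0 : 0 < d0) (h1 : 0 < d1) (h0l : d0 ≤ lam) (h1l : d1 ≤ lam)
    (e0 : T0 = convexHull ℝ ({![0,0], ![d0,0], ![0,d0]} : Set (Fin 2 → ℝ)))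
    (e1 : T1 = convexHull ℝ ({![lam,0], ![lam-d1,0], ![lam-d1,d1]} : Set (Fin 2 → ℝ)))
    (hunion : T0 ∪ T1 = convexHull ℝ ({![0,0], ![lam,0], ![0,lam]} : Set (Fin 2 → ℝ)))
    (hdisj : interior T0 ∩ interior T1 = ∅) : False := by
  have hV2 : (![0, lam] : Fin 2 → ℝ) ∈ T0 ∪ T1 := by
    rw [hunion]; exact subset_convexHull ℝ _ (by simp)
  rcases hV2 with hV | hV
  · rw [e0, big_eq h0] at hV
    obtain ⟨-, -, hs⟩ := hV
    simp only [Matrix.cons_val_zero, Matrix.cons_val_one, Matrix.head_cons] at hs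
    have hd0 : d0 = lam := le_antisymm h0l (by linarith)
    refine pc_contra hdisj (q := ![lam - d1/2, d1/4]) ?_ ?_
    · rw [e0, hd0]
      apply strict_sub_interior_big hlam
      simp only [Set.mem_setOf_eq, Matrix.cons_val_zero, Matrix.cons_val_one, Matrix.head_cons]
      refine ⟨by linarith, by linarith, by linarith⟩
    · rw [e1]
      apply strict_sub_interior_c1 h1
      simp only [Set.mem_setOf_eq, Matrix.cons_val_zero, Matrix.cons_val_one, Matrix.head_cons]
      refine ⟨by linarith, by linarith, by linarith⟩
  · rw [e1, corner1_eq h1] at hV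
    obtain ⟨-, hs, -⟩ := hV
    simp only [Matrix.cons_val_zero, Matrix.cons_val_one, Matrix.head_cons] at hs
    have hd1 : d1 = lam := le_antisymm h1l (by linarith)
    refine pc_contra hdisj (q := ![d0/4, d0/4]) ?_ ?_
    · rw [e0]
      apply strict_sub_interior_big h0
      simp only [Set.mem_setOf_eq, Matrix.cons_val_zero, Matrix.cons_val_one, Matrix.head_cons]
      refine ⟨by linarith, by linarith, by linarith⟩
    · rw [e1, hd1]
      apply strict_sub_interior_c1 hlam
      simp only [Set.mem_setOf_eq, Matrix.cons_val_zero, Matrix.cons_val_one, Matrix.head_cons]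
      refine ⟨by linarith, by linarith, by linarith⟩

lemma pc02 (hlam : 0 < lam) (h0 : 0 < d0) (h1 : 0 < d1) (h0l : d0 ≤ lam) (h1l : d1 ≤ lam)
    (e0 : T0 = convexHull ℝ ({![0,0], ![d0,0], ![0,d0]} : Set (Fin 2 → ℝ)))
    (e1 : T1 = convexHull ℝ ({![0,lam], ![0,lam-d1], ![d1,lam-d1]} : Set (Fin 2 → ℝ)))
    (hunion : T0 ∪ T1 = convexHull ℝ ({![0,0], ![lam,0], ![0,lam]} : Set (Fin 2 → ℝ)))
    (hdisj : interior T0 ∩ interior T1 = ∅) : False := by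
  have hV1 : (![lam, 0] : Fin 2 → ℝ) ∈ T0 ∪ T1 := by
    rw [hunion]; exact subset_convexHull ℝ _ (by simp)
  rcases hV1 with hV | hV
  · rw [e0, big_eq h0] at hV
    obtain ⟨-, -, hs⟩ := hV
    simp only [Matrix.cons_val_zero, Matrix.cons_val_one, Matrix.head_cons] at hs
    have hd0 : d0 = lam := le_antisymm h0l (by linarith)
    refine pc_contra hdisj (q := ![d1/4, lam - d1/2]) ?_ ?_
    · rw [e0, hd0]
      apply strict_sub_interior_big hlam
      simp only [Set.mem_setOf_eq, Matrix.cons_val_zero, Matrix.cons_val_one, Matrix.head_cons]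
      refine ⟨by linarith, by linarith, by linarith⟩
    · rw [e1]
      apply strict_sub_interior_c2 h1
      simp only [Set.mem_setOf_eq, Matrix.cons_val_zero, Matrix.cons_val_one, Matrix.head_cons]
      refine ⟨by linarith, by linarith, by linarith⟩
  · rw [e1, corner2_eq h1] at hV
    obtain ⟨-, hs, -⟩ := hV
    simp only [Matrix.cons_val_zero, Matrix.cons_val_one, Matrix.head_cons] at hs
    have hd1 : d1 = lam := le_antisymm h1l (by linarith)
    refine pc_contra hdisj (q := ![d0/4, d0/4]) ?_ ?_
    · rw [e0]
      apply strict_sub_interior_big h0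
      simp only [Set.mem_setOf_eq, Matrix.cons_val_zero, Matrix.cons_val_one, Matrix.head_cons]
      refine ⟨by linarith, by linarith, by linarith⟩
    · rw [e1, hd1]
      apply strict_sub_interior_c2 hlam
      simp only [Set.mem_setOf_eq, Matrix.cons_val_zero, Matrix.cons_val_one, Matrix.head_cons]
      refine ⟨by linarith, by linarith, by linarith⟩

lemma pc12 (hlam : 0 < lam) (h0 : 0 < d0) (h1 : 0 < d1) (h0l : d0 ≤ lam) (h1l : d1 ≤ lam)
    (e0 : T0 = convexHull ℝ ({![lam,0], ![lam-d0,0], ![lam-d0,d0]} : Set (Fin 2 → ℝ)))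
    (e1 : T1 = convexHull ℝ ({![0,lam], ![0,lam-d1], ![d1,lam-d1]} : Set (Fin 2 → ℝ)))
    (hunion : T0 ∪ T1 = convexHull ℝ ({![0,0], ![lam,0], ![0,lam]} : Set (Fin 2 → ℝ)))
    (hdisj : interior T0 ∩ interior T1 = ∅) : False := by
  have hV0 : (![0, 0] : Fin 2 → ℝ) ∈ T0 ∪ T1 := by
    rw [hunion]; exact subset_convexHull ℝ _ (by simp)
  rcases hV0 with hV | hV
  · rw [e0, corner1_eq h0] at hV
    obtain ⟨-, hs, -⟩ := hV
    simp only [Matrix.cons_val_zero, Matrix.cons_val_one, Matrix.head_cons] at hs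
    have hd0 : d0 = lam := le_antisymm h0l (by linarith)
    refine pc_contra hdisj (q := ![d1/4, lam - d1/2]) ?_ ?_
    · rw [e0, hd0]
      apply strict_sub_interior_c1 hlam
      simp only [Set.mem_setOf_eq, Matrix.cons_val_zero, Matrix.cons_val_one, Matrix.head_cons]
      refine ⟨by linarith, by linarith, by linarith⟩
    · rw [e1]
      apply strict_sub_interior_c2 h1
      simp only [Set.mem_setOf_eq, Matrix.cons_val_zero, Matrix.cons_val_one, Matrix.head_cons]
      refine ⟨by linarith, by linarith, by linarith⟩
  · rw [e1, corner2_eq h1] at hV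
    obtain ⟨-, hs, -⟩ := hV
    simp only [Matrix.cons_val_zero, Matrix.cons_val_one, Matrix.head_cons] at hs
    have hd1 : d1 = lam := le_antisymm h1l (by linarith)
    refine pc_contra hdisj (q := ![lam - d0/2, d0/4]) ?_ ?_
    · rw [e0]
      apply strict_sub_interior_c1 h0
      simp only [Set.mem_setOf_eq, Matrix.cons_val_zero, Matrix.cons_val_one, Matrix.head_cons]
      refine ⟨by linarith, by linarith, by linarith⟩
    · rw [e1, hd1]
      apply strict_sub_interior_c2 hlam
      simp only [Set.mem_setOf_eq, Matrix.cons_val_zero, Matrix.cons_val_one, Matrix.head_cons]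
      refine ⟨by linarith, by linarith, by linarith⟩

end PairCases

/-- the Delzant simplex conv{0, λe₁, λe₂} ⊆ ℝ² cannot be written as the
union of two closed triangles with disjoint interiors, each SL(2,ℤ)-equivalent to a
translate of some dᵢ·Δ⁰ (dᵢ > 0), and each having a vertex among {0, λe₁, λe₂} whose two
adjacent sides lie in the boundary of the big triangle. -/
theorem stmt_16 (lam : ℝ) (hlam : 0 < lam)
    (A : Fin 2 → Matrix (Fin 2) (Fin 2) ℤ)
    (hA : ∀ i, (A i).det = 1 ∨ (A i).det = -1)
    (d : Fin 2 → ℝ) (hd : ∀ i, 0 < d i)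
    (x : Fin 2 → (Fin 2 → ℝ))
    (T : Fin 2 → Set (Fin 2 → ℝ))
    (hT : ∀ i, T i = (fun y => (A i).map (Int.cast : ℤ → ℝ) *ᵥ y + x i) ''
      (d i • convexHull ℝ {![0, 0], ![1, 0], ![0, 1]}))
    (p : Fin 2 → Fin 3 → (Fin 2 → ℝ))
    (hp : ∀ i, p i = fun j =>
      (A i).map (Int.cast : ℤ → ℝ) *ᵥ (d i • ![![0, 0], ![1, 0], ![0, 1]] j) + x i)
    (hunion : T 0 ∪ T 1 = convexHull ℝ {![0, 0], ![lam, 0], ![0, lam]})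
    (hdisj : interior (T 0) ∩ interior (T 1) = ∅)
    (hvertex : ∀ i, ∃ j : Fin 3,
      p i j ∈ ({![0, 0], ![lam, 0], ![0, lam]} : Set (Fin 2 → ℝ)) ∧
      ∀ k, k ≠ j → convexHull ℝ (p i '' {m | m ≠ k}) ⊆
        frontier (convexHull ℝ {![0, 0], ![lam, 0], ![0, lam]})) :
    False := by
  have hT' : ∀ i, T i = convexHull ℝ ({p i 0, p i 1, p i 2} : Set (Fin 2 → ℝ)) := by
    intro i
    rw [hT i, image_tri, hp i]
    simp
  have h0 : ∀ i t, p i 0 t = x i t := by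
    intro i t
    rw [hp i]
    fin_cases t <;> simp [Matrix.mulVec, dotProduct, Fin.sum_univ_two]
  have h1 : ∀ i t, p i 1 t = x i t + d i * (A i t 0 : ℝ) := by
    intro i t
    rw [hp i]
    fin_cases t <;> simp [Matrix.mulVec, dotProduct, Fin.sum_univ_two] <;> ring
  have h2 : ∀ i t, p i 2 t = x i t + d i * (A i t 1 : ℝ) := by
    intro i t
    rw [hp i]
    fin_cases t <;> simp [Matrix.mulVec, dotProduct, Fin.sum_univ_two] <;> ring
  have key : ∀ i, d i ≤ lam ∧
      (T i = convexHull ℝ ({![0,0],![d i,0],![0,d i]} : Set (Fin 2 → ℝ)) ∨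
       T i = convexHull ℝ ({![lam,0],![lam-d i,0],![lam-d i,d i]} : Set (Fin 2 → ℝ)) ∨
       T i = convexHull ℝ ({![0,lam],![0,lam-d i],![d i,lam-d i]} : Set (Fin 2 → ℝ))) := by
    intro i
    have := key_tri hlam (hd i) (hA i) (h0 i) (h1 i) (h2 i) (hvertex i)
    rw [← hT' i] at this
    exact this
  obtain ⟨hl0, hc0⟩ := key 0
  obtain ⟨hl1, hc1⟩ := key 1
  have hdisj' : interior (T 1) ∩ interior (T 0) = ∅ := by rw [Set.inter_comm]; exact hdisj
  have hunion' : T 1 ∪ T 0 = convexHull ℝ {![0, 0], ![lam, 0], ![0, lam]} := by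
    rw [Set.union_comm]; exact hunion
  rcases hc0 with c0 | c0 | c0 <;> rcases hc1 with c1 | c1 | c1
  · exact pc00 hlam (hd 0) (hd 1) hl0 hl1 c0 c1 hdisj
  · exact pc01 hlam (hd 0) (hd 1) hl0 hl1 c0 c1 hunion hdisj
  · exact pc02 hlam (hd 0) (hd 1) hl0 hl1 c0 c1 hunion hdisj
  · exact pc01 hlam (hd 1) (hd 0) hl1 hl0 c1 c0 hunion' hdisj'
  · exact pc11 hlam (hd 0) (hd 1) hl0 hl1 c0 c1 hdisj
  · exact pc12 hlam (hd 0) (hd 1) hl0 hl1 c0 c1 hunion hdisj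
  · exact pc02 hlam (hd 1) (hd 0) hl1 hl0 c1 c0 hunion' hdisj'
  · exact pc12 hlam (hd 1) (hd 0) hl1 hl0 c1 c0 hunion' hdisj'
  · exact pc22 hlam (hd 0) (hd 1) hl0 hl1 c0 c1 hdisj
end

section
/- Suppose Δ ⊂ ℝⁿ is a compact convex set equal to the union of the closures of finitely many pairwise disjoint open n-simplices Σ each with all but one facet in ∂Δ, and suppose the family contains at least two simplices. If Σ₀ and Σ₁ are two members whose exceptional facets 𝐅₀ and 𝐅₁ (the unique facets not contained in ∂Δ) satisfy dim(𝐅₀ ∩ 𝐅₁) = n-1, then 𝐅₀ = 𝐅₁, where 𝐅ᵢ = Δ ∩ Hᵢ for the unique hyperplanes Hᵢ containing 𝐅ᵢ. -/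
open Matrix

def dotL {n : ℕ} (u : Fin n → ℝ) : (Fin n → ℝ) →ₗ[ℝ] ℝ where
  toFun x := x ⬝ᵥ u
  map_add' x y := add_dotProduct x y u
  map_smul' c x := smul_dotProduct c x u

lemma ker_dotL_finrank {n : ℕ} {u : Fin n → ℝ} (hu : u ≠ 0) :
    Module.finrank ℝ (LinearMap.ker (dotL u)) = n - 1 := by
  have hd : u ⬝ᵥ u ≠ 0 := by
    simpa [dotProduct_self_eq_zero] using hu
  have hsurj : Function.Surjective (dotL u) := by
    intro y
    refine ⟨(y / (u ⬝ᵥ u)) • u, ?_⟩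
    simp [dotL, smul_dotProduct, div_mul_cancel₀, hd]
  have hrange : LinearMap.range (dotL u) = ⊤ := LinearMap.range_eq_top.2 hsurj
  have := LinearMap.finrank_range_add_finrank_ker (dotL u)
  rw [hrange] at this
  simp [Module.finrank_fin_fun] at this
  omega

/-- Lemma 3.5: two members Σ₀, Σ₁ of a family of pairwise disjoint open
n-simplices whose closures fill the compact convex set Δ, each having all but one facet
in ∂Δ; if the exceptional facets 𝐅₀ = Δ ∩ H₀ and 𝐅₁ = Δ ∩ H₁ intersect in dimension
n - 1, then they coincide. -/
theorem stmt_19 {n : ℕ} (hn : 1 ≤ n) (Δ : Set (Fin n → ℝ))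
    (hΔc : IsCompact Δ) (hΔ : Convex ℝ Δ)
    (P₀ P₁ : Fin (n + 1) → (Fin n → ℝ))
    (hP₀ : AffineIndependent ℝ P₀) (hP₁ : AffineIndependent ℝ P₁)
    (b₀ b₁ : Fin (n + 1)) (F₀ F₁ : Set (Fin n → ℝ))
    (hF₀def : F₀ = convexHull ℝ (P₀ '' {m | m ≠ b₀}))
    (hF₁def : F₁ = convexHull ℝ (P₁ '' {m | m ≠ b₁}))
    (hsub₀ : convexHull ℝ (Set.range P₀) ⊆ Δ)
    (hsub₁ : convexHull ℝ (Set.range P₁) ⊆ Δ)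
    (hexc₀ : ¬ F₀ ⊆ frontier Δ) (hexc₁ : ¬ F₁ ⊆ frontier Δ)
    (hoth₀ : ∀ j, j ≠ b₀ → convexHull ℝ (P₀ '' {m | m ≠ j}) ⊆ frontier Δ)
    (hoth₁ : ∀ j, j ≠ b₁ → convexHull ℝ (P₁ '' {m | m ≠ j}) ⊆ frontier Δ)
    (u₀ u₁ : Fin n → ℝ) (hu₀ : u₀ ≠ 0) (hu₁ : u₁ ≠ 0) (l₀ l₁ : ℝ)
    (hH₀ : Δ ∩ {x | x ⬝ᵥ u₀ = l₀} = F₀)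
    (hH₁ : Δ ∩ {x | x ⬝ᵥ u₁ = l₁} = F₁)
    (hne : (F₀ ∩ F₁).Nonempty)
    (hdim : Module.finrank ℝ (affineSpan ℝ (F₀ ∩ F₁)).direction = n - 1) :
    F₀ = F₁ := by
  obtain ⟨p, hp₀, hp₁⟩ := hne
  have hpF₀ := hp₀
  have hpF₁ := hp₁
  rw [← hH₀] at hpF₀
  rw [← hH₁] at hpF₁
  have key : ∀ (u : Fin n → ℝ) (l : ℝ), (F₀ ∩ F₁) ⊆ {x | x ⬝ᵥ u = l} →
      vectorSpan ℝ (F₀ ∩ F₁) ≤ LinearMap.ker (dotL u) := by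
    intro u l hsub
    rw [vectorSpan_def]
    refine Submodule.span_le.2 ?_
    rintro v ⟨a, ha, b, hb, rfl⟩
    have ha' : a ⬝ᵥ u = l := hsub ha
    have hb' : b ⬝ᵥ u = l := hsub hb
    simp [dotL, LinearMap.mem_ker, vsub_eq_sub, sub_dotProduct, ha', hb']
  have hsub₀' : (F₀ ∩ F₁) ⊆ {x | x ⬝ᵥ u₀ = l₀} := fun x hx => by
    have : x ∈ Δ ∩ {x | x ⬝ᵥ u₀ = l₀} := hH₀ ▸ hx.1
    exact this.2
  have hsub₁' : (F₀ ∩ F₁) ⊆ {x | x ⬝ᵥ u₁ = l₁} := fun x hx => by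
    have : x ∈ Δ ∩ {x | x ⬝ᵥ u₁ = l₁} := hH₁ ▸ hx.2
    exact this.2
  have hdim' : Module.finrank ℝ (vectorSpan ℝ (F₀ ∩ F₁)) = n - 1 := by
    rw [← direction_affineSpan]; exact hdim
  have heq : ∀ (u : Fin n → ℝ), u ≠ 0 → vectorSpan ℝ (F₀ ∩ F₁) ≤ LinearMap.ker (dotL u) →
      vectorSpan ℝ (F₀ ∩ F₁) = LinearMap.ker (dotL u) := by
    intro u hu hle
    refine Submodule.eq_of_le_of_finrank_le hle ?_
    rw [ker_dotL_finrank hu, hdim']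
  have hk₀ := heq u₀ hu₀ (key u₀ l₀ hsub₀')
  have hk₁ := heq u₁ hu₁ (key u₁ l₁ hsub₁')
  have hker : LinearMap.ker (dotL u₀) = LinearMap.ker (dotL u₁) := by rw [← hk₀, hk₁]
  have hHeq : {x : Fin n → ℝ | x ⬝ᵥ u₀ = l₀} = {x : Fin n → ℝ | x ⬝ᵥ u₁ = l₁} := by
    have hp0 : p ⬝ᵥ u₀ = l₀ := hpF₀.2
    have hp1 : p ⬝ᵥ u₁ = l₁ := hpF₁.2
    ext x
    have h0 : x ⬝ᵥ u₀ = l₀ ↔ (x - p) ∈ LinearMap.ker (dotL u₀) := by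
      simp [dotL, LinearMap.mem_ker, sub_dotProduct, hp0, sub_eq_zero]
    have h1 : x ⬝ᵥ u₁ = l₁ ↔ (x - p) ∈ LinearMap.ker (dotL u₁) := by
      simp [dotL, LinearMap.mem_ker, sub_dotProduct, hp1, sub_eq_zero]
    simp only [Set.mem_setOf_eq]
    rw [h0, h1, hker]
  rw [← hH₀, ← hH₁, hHeq]
end
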